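/- arXiv:1602.06746 — 7 statements merged into one kernel-verified Lean document; each statement's English description precedes it below -/
import Mathlib

section
/- Let Θ ⊆ ℝ^m be convex and let d : Θ × {0,1} → ℝ be such that d₀ := d(·,0) and d₁ := d(·,1) are convex. Define Ψ(θ, y) := inf over θ⁰, θ¹ ∈ Θ with (1−y)θ⁰ + yθ¹ = θ of (1−y)d₀(θ⁰) + y d₁(θ¹), for y ∈ (0,1). Then the function d** on Θ × [0,1] defined by d**(θ,y) = d(θ,y) if y ∈ {0,1} and d**(θ,y) = Ψ(θ,y) if y ∈ (0,1) is convex. -/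
/-!
Write `θ = (1 - y) θ⁰ + y θ¹` with cost `(1 - y) d₀ θ⁰ + y d₁ θ¹`. At `y ∈ {0, 1}` the only cost is
`d₀ θ` resp. `d₁ θ`, so `d**` is the infimum of these costs on all of `Θ × [0,1]`. Given splittings
of two points, the `θ⁰`-parts and the `θ¹`-parts of their weighted sum can each be merged into one
point of `Θ` by convexity of `d₀` resp. `d₁`. This splits the convex combination of the points at a
cost at most the convex combination of the costs; take infima, which are finite since `d₀, d₁ ≥ 0`.
-/

open Set Pointwise

theorem ConvexOn.exists_mem_smul_eq_and_mul_le {𝕜 E : Type*} [Field 𝕜] [LinearOrder 𝕜]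
    [IsStrictOrderedRing 𝕜] [AddCommGroup E] [Module 𝕜 E] {s : Set E} {f : E → 𝕜}
    (hf : ConvexOn 𝕜 s f) {x x' : E} (hx : x ∈ s) (hx' : x' ∈ s) {c c' : 𝕜}
    (hc : 0 ≤ c) (hc' : 0 ≤ c') :
    ∃ z ∈ s, (c + c') • z = c • x + c' • x' ∧ (c + c') * f z ≤ c * f x + c' * f x' := by
  rcases (add_nonneg hc hc').eq_or_lt with hsum | hsum
  · obtain ⟨rfl, rfl⟩ : c = 0 ∧ c' = 0 := ⟨by linarith, by linarith⟩
    exact ⟨x, hx, by simp, by simp⟩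
  have hweights : c / (c + c') + c' / (c + c') = 1 := by field_simp
  refine ⟨(c / (c + c')) • x + (c' / (c + c')) • x',
    hf.1 hx hx' (by positivity) (by positivity) hweights, ?_, ?_⟩
  · rw [smul_add, smul_smul, smul_smul, mul_div_cancel₀ _ hsum.ne', mul_div_cancel₀ _ hsum.ne']
  · calc (c + c') * f ((c / (c + c')) • x + (c' / (c + c')) • x')
        ≤ (c + c') * (c / (c + c') * f x + c' / (c + c') * f x') :=
          mul_le_mul_of_nonneg_left (hf.2 hx hx' (by positivity) (by positivity) hweights)
            hsum.le
      _ = c * f x + c' * f x' := by field_simp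

theorem Real.sInf_le_mul_add_mul {A B C : Set ℝ} (hA : A.Nonempty) (hB : B.Nonempty)
    (hC : BddBelow C) {a b : ℝ} (ha : 0 ≤ a) (hb : 0 ≤ b)
    (h : ∀ x ∈ A, ∀ x' ∈ B, ∃ z ∈ C, z ≤ a * x + b * x') :
    sInf C ≤ a * sInf A + b * sInf B := by
  refine le_of_forall_pos_le_add fun ε hε => ?_
  obtain ⟨_, ⟨x, hx, rfl⟩, hxε⟩ := Real.lt_sInf_add_pos (hA.smul_set (a := a)) (half_pos hε)
  obtain ⟨_, ⟨x', hx', rfl⟩, hx'ε⟩ := Real.lt_sInf_add_pos (hB.smul_set (a := b)) (half_pos hε)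
  simp only [Real.sInf_smul_of_nonneg ha, smul_eq_mul] at hxε
  simp only [Real.sInf_smul_of_nonneg hb, smul_eq_mul] at hx'ε
  obtain ⟨z, hz, hzle⟩ := h x hx x' hx'
  linarith [csInf_le hC hz]

section SplitValues

variable {E : Type*} [AddCommGroup E] [Module ℝ E]

/-- The infimal combination `Ψ θ y` is the infimum of this set. -/
def splitValues (Θ : Set E) (d₀ d₁ : E → ℝ) (θ : E) (y : ℝ) : Set ℝ :=
  {v : ℝ | ∃ θ0 ∈ Θ, ∃ θ1 ∈ Θ, (1 - y) • θ0 + y • θ1 = θ ∧ v = (1 - y) * d₀ θ0 + y * d₁ θ1}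

variable {Θ : Set E} {d₀ d₁ : E → ℝ}

theorem splitValues_nonempty {θ : E} (hθ : θ ∈ Θ) (y : ℝ) :
    (splitValues Θ d₀ d₁ θ y).Nonempty :=
  ⟨_, θ, hθ, θ, hθ, by module, rfl⟩

theorem splitValues_bddBelow (hd₀ : ∀ θ ∈ Θ, 0 ≤ d₀ θ) (hd₁ : ∀ θ ∈ Θ, 0 ≤ d₁ θ)
    (θ : E) {y : ℝ} (hy : y ∈ Icc (0 : ℝ) 1) : BddBelow (splitValues Θ d₀ d₁ θ y) := by
  refine ⟨0, ?_⟩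
  rintro _ ⟨θ0, hθ0, θ1, hθ1, -, rfl⟩
  have := hd₀ θ0 hθ0
  have := hd₁ θ1 hθ1
  nlinarith [hy.1, hy.2]

theorem splitValues_zero {θ : E} (hθ : θ ∈ Θ) : splitValues Θ d₀ d₁ θ 0 = {d₀ θ} := by
  ext v
  constructor
  · rintro ⟨θ0, -, θ1, -, hsplit, rfl⟩
    simp only [sub_zero, one_smul, zero_smul, add_zero] at hsplit
    simp [hsplit]
  · rintro rfl
    exact ⟨θ, hθ, θ, hθ, by module, by simp⟩

theorem splitValues_one {θ : E} (hθ : θ ∈ Θ) : splitValues Θ d₀ d₁ θ 1 = {d₁ θ} := by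
  ext v
  constructor
  · rintro ⟨θ0, -, θ1, -, hsplit, rfl⟩
    simp only [sub_self, zero_smul, one_smul, zero_add] at hsplit
    simp [hsplit]
  · rintro rfl
    exact ⟨θ, hθ, θ, hθ, by module, by simp⟩

theorem exists_mem_splitValues_le (hd₀ : ConvexOn ℝ Θ d₀) (hd₁ : ConvexOn ℝ Θ d₁)
    {θ θ' : E} {y y' v v' : ℝ} (hy : y ∈ Icc (0 : ℝ) 1) (hy' : y' ∈ Icc (0 : ℝ) 1)
    (hv : v ∈ splitValues Θ d₀ d₁ θ y) (hv' : v' ∈ splitValues Θ d₀ d₁ θ' y')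
    {a b : ℝ} (ha : 0 ≤ a) (hb : 0 ≤ b) (hab : a + b = 1) :
    ∃ w ∈ splitValues Θ d₀ d₁ (a • θ + b • θ') (a * y + b * y'), w ≤ a * v + b * v' := by
  obtain ⟨θ0, hθ0, θ1, hθ1, rfl, rfl⟩ := hv
  obtain ⟨θ0', hθ0', θ1', hθ1', rfl, rfl⟩ := hv'
  have hweight : a * (1 - y) + b * (1 - y') = 1 - (a * y + b * y') := by
    linear_combination hab
  obtain ⟨z0, hz0, hz0_eq, hz0_le⟩ := hd₀.exists_mem_smul_eq_and_mul_le hθ0 hθ0'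
    (mul_nonneg ha (sub_nonneg.2 hy.2)) (mul_nonneg hb (sub_nonneg.2 hy'.2))
  obtain ⟨z1, hz1, hz1_eq, hz1_le⟩ := hd₁.exists_mem_smul_eq_and_mul_le hθ1 hθ1'
    (mul_nonneg ha hy.1) (mul_nonneg hb hy'.1)
  rw [hweight] at hz0_eq hz0_le
  refine ⟨_, ⟨z0, hz0, z1, hz1, ?_, rfl⟩, ?_⟩
  · rw [hz0_eq, hz1_eq]
    module
  · linarith

theorem convexOn_sInf_splitValues (hd₀ : ConvexOn ℝ Θ d₀) (hd₁ : ConvexOn ℝ Θ d₁)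
    (hd₀_nonneg : ∀ θ ∈ Θ, 0 ≤ d₀ θ) (hd₁_nonneg : ∀ θ ∈ Θ, 0 ≤ d₁ θ) :
    ConvexOn ℝ (Θ ×ˢ Icc (0 : ℝ) 1) (fun p => sInf (splitValues Θ d₀ d₁ p.1 p.2)) := by
  refine ⟨hd₀.1.prod (convex_Icc 0 1), ?_⟩
  rintro ⟨θ, y⟩ ⟨hθ, hy⟩ ⟨θ', y'⟩ ⟨hθ', hy'⟩ a b ha hb hab
  exact Real.sInf_le_mul_add_mul (splitValues_nonempty hθ y) (splitValues_nonempty hθ' y')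
    (splitValues_bddBelow hd₀_nonneg hd₁_nonneg _ (convex_Icc 0 1 hy hy' ha hb hab)) ha hb
    fun v hv v' hv' => exists_mem_splitValues_le hd₀ hd₁ hy hy' hv hv' ha hb hab

end SplitValues

theorem biconjugate_extension_convex_general
    (m : ℕ) (Θ : Set (EuclideanSpace ℝ (Fin m)))
    (d₀ d₁ : EuclideanSpace ℝ (Fin m) → ℝ)
    (hd₀ : ConvexOn ℝ Θ d₀) (hd₁ : ConvexOn ℝ Θ d₁)
    (hd₀0 : ∀ θ ∈ Θ, 0 ≤ d₀ θ) (hd₁0 : ∀ θ ∈ Θ, 0 ≤ d₁ θ)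
    (Ψ : EuclideanSpace ℝ (Fin m) → ℝ → ℝ)
    (hΨ : ∀ θ ∈ Θ, ∀ y ∈ Ioo (0:ℝ) 1,
      Ψ θ y = sInf {v : ℝ | ∃ θ0 ∈ Θ, ∃ θ1 ∈ Θ,
        (1 - y) • θ0 + y • θ1 = θ ∧ v = (1 - y) * d₀ θ0 + y * d₁ θ1})
    (dstar : EuclideanSpace ℝ (Fin m) → ℝ → ℝ)
    (hb0 : ∀ θ ∈ Θ, dstar θ 0 = d₀ θ)
    (hb1 : ∀ θ ∈ Θ, dstar θ 1 = d₁ θ)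
    (hmid : ∀ θ ∈ Θ, ∀ y ∈ Ioo (0:ℝ) 1, dstar θ y = Ψ θ y) :
    ConvexOn ℝ (Θ ×ˢ Icc (0:ℝ) 1) (fun p => dstar p.1 p.2) := by
  refine (convexOn_sInf_splitValues hd₀ hd₁ hd₀0 hd₁0).congr ?_
  rintro ⟨θ, y⟩ ⟨hθ, hy0, hy1⟩
  dsimp only
  rcases hy0.eq_or_lt with rfl | hy0
  · rw [hb0 θ hθ, splitValues_zero hθ, csInf_singleton]
  rcases hy1.eq_or_lt with rfl | hy1
  · rw [hb1 θ hθ, splitValues_one hθ, csInf_singleton]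
  rw [hmid θ hθ y ⟨hy0, hy1⟩, hΨ θ hθ y ⟨hy0, hy1⟩, splitValues]

/-- the piecewise function built from `d₀, d₁` on the boundary and the
weighted infimal convolution `Ψ` in the interior is convex on `Θ × [0,1]`. -/
theorem biconjugate_extension_convex
    (m : ℕ) (Θ : Set (EuclideanSpace ℝ (Fin m))) (hΘ : Convex ℝ Θ)
    (d₀ d₁ : EuclideanSpace ℝ (Fin m) → ℝ)
    (hd₀ : ConvexOn ℝ Θ d₀) (hd₁ : ConvexOn ℝ Θ d₁)
    (hd₀0 : ∀ θ ∈ Θ, 0 ≤ d₀ θ) (hd₁0 : ∀ θ ∈ Θ, 0 ≤ d₁ θ)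
    (Ψ : EuclideanSpace ℝ (Fin m) → ℝ → ℝ)
    (hΨ : ∀ θ ∈ Θ, ∀ y ∈ Ioo (0:ℝ) 1,
      Ψ θ y = sInf {v : ℝ | ∃ θ0 ∈ Θ, ∃ θ1 ∈ Θ,
        (1 - y) • θ0 + y • θ1 = θ ∧ v = (1 - y) * d₀ θ0 + y * d₁ θ1})
    (dstar : EuclideanSpace ℝ (Fin m) → ℝ → ℝ)
    (hb0 : ∀ θ ∈ Θ, dstar θ 0 = d₀ θ)
    (hb1 : ∀ θ ∈ Θ, dstar θ 1 = d₁ θ)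
    (hmid : ∀ θ ∈ Θ, ∀ y ∈ Ioo (0:ℝ) 1, dstar θ y = Ψ θ y) :
    ConvexOn ℝ (Θ ×ˢ Icc (0:ℝ) 1) (fun p => dstar p.1 p.2) :=
  biconjugate_extension_convex_general m Θ d₀ d₁ hd₀ hd₁ hd₀0 hd₁0 Ψ hΨ dstar hb0 hb1 hmid
end

section
/- Fix x ∈ ℝ^m and C > 0, and define d : ℝ^m × {0,1} → ℝ by d(θ, y) = ‖θ‖₂² − C⟨x, θ⟩y. Then the tightest convex extension of d to ℝ^m × [0,1] is d**(θ, y) = ‖θ − y(C/2)x‖₂² − y‖(C/2)x‖₂². -/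
open Set

/-!
With `a = (C/2) • x` one has `d(θ, y) = D(θ, y)` for `y ∈ {0, 1}`, where
`D(θ, y) = ‖θ - y • a‖² - y ‖a‖²` is a convex quadratic (a squared norm of a linear map plus a
linear term). Conversely every point `(θ, y)` with `y ∈ [0, 1]` is the convex combination
`(1 - y) • (θ - y • a, 0) + y • (θ - y • a + a, 1)`, and `D` is affine along this segment
(its quadratic part `‖θ - y • a‖²` is constant there), so any convex `g` agreeing with `d` at
`y ∈ {0, 1}` is bounded by `D`.
-/

namespace ConvexExtension

variable {E : Type*} [NormedAddCommGroup E] [InnerProductSpace ℝ E]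

noncomputable def quadExt (a θ : E) (y : ℝ) : ℝ :=
  ‖θ - y • a‖ ^ 2 - y * ‖a‖ ^ 2

theorem quadExt_zero (a θ : E) : quadExt a θ 0 = ‖θ‖ ^ 2 := by
  simp [quadExt]

theorem quadExt_one (a θ : E) : quadExt a θ 1 = ‖θ‖ ^ 2 - 2 * inner ℝ a θ := by
  rw [quadExt, one_smul, norm_sub_sq_real, real_inner_comm]
  ring

theorem convexOn_quadExt (a : E) : ConvexOn ℝ univ fun p : E × ℝ => quadExt a p.1 p.2 := by
  have hsq : ConvexOn ℝ univ fun v : E => ‖v‖ ^ 2 :=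
    (convexOn_norm convex_univ).pow (fun _ _ => norm_nonneg _) 2
  have hquad := hsq.comp_linearMap (LinearMap.fst ℝ E ℝ - (LinearMap.snd ℝ E ℝ).smulRight a)
  rw [preimage_univ] at hquad
  have hlin := ((-‖a‖ ^ 2) • LinearMap.snd ℝ E ℝ).convexOn convex_univ
  refine (hquad.add hlin).congr fun p _ => ?_
  simp [quadExt, sub_eq_add_neg, mul_comm]

theorem le_quadExt_of_convexOn {a : E} {g : E × ℝ → ℝ} (hg : ConvexOn ℝ (univ ×ˢ Icc 0 1) g)
    (h₀ : ∀ θ, g (θ, 0) ≤ quadExt a θ 0) (h₁ : ∀ θ, g (θ, 1) ≤ quadExt a θ 1)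
    {θ : E} {y : ℝ} (hy : y ∈ Icc 0 1) : g (θ, y) ≤ quadExt a θ y := by
  obtain ⟨hy₀, hy₁⟩ := hy
  set θ₀ := θ - y • a with hθ₀
  have hcomb : (1 - y) • (θ₀, (0 : ℝ)) + y • (θ₀ + a, (1 : ℝ)) = (θ, y) := by
    ext
    · simp only [Prod.fst_add, Prod.smul_fst, hθ₀]; module
    · simp
  have hy₁' : 0 ≤ 1 - y := sub_nonneg.2 hy₁
  calc g (θ, y) = g ((1 - y) • (θ₀, (0 : ℝ)) + y • (θ₀ + a, (1 : ℝ))) := by rw [hcomb]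
    _ ≤ (1 - y) * g (θ₀, 0) + y * g (θ₀ + a, 1) :=
      hg.2 (by simp) (by simp) hy₁' hy₀ (sub_add_cancel 1 y)
    _ ≤ (1 - y) * quadExt a θ₀ 0 + y * quadExt a (θ₀ + a) 1 := by
      gcongr
      exacts [h₀ θ₀, h₁ (θ₀ + a)]
    _ = quadExt a θ y := by
      rw [quadExt_zero, quadExt, quadExt, one_smul, add_sub_cancel_right, ← hθ₀]
      ring

end ConvexExtension

open ConvexExtension in
theorem instructive_example_tightest_general
    (m : ℕ) (x : EuclideanSpace ℝ (Fin m)) (C : ℝ)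
    (d : EuclideanSpace ℝ (Fin m) → ℝ → ℝ)
    (hd : ∀ θ y, d θ y = ‖θ‖ ^ 2 - C * (inner ℝ x θ : ℝ) * y)
    (dstar : EuclideanSpace ℝ (Fin m) → ℝ → ℝ)
    (hdstar : ∀ θ y, dstar θ y = ‖θ - y • ((C / 2) • x)‖ ^ 2 - y * ‖(C / 2) • x‖ ^ 2) :
    ConvexOn ℝ (univ ×ˢ Icc (0:ℝ) 1) (fun p => dstar p.1 p.2) ∧
    (∀ θ, dstar θ 0 = d θ 0) ∧ (∀ θ, dstar θ 1 = d θ 1) ∧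
    (∀ g : EuclideanSpace ℝ (Fin m) × ℝ → ℝ,
      ConvexOn ℝ (univ ×ˢ Icc (0:ℝ) 1) g →
      (∀ θ, g (θ, 0) = d θ 0) → (∀ θ, g (θ, 1) = d θ 1) →
      ∀ θ, ∀ y ∈ Icc (0:ℝ) 1, g (θ, y) ≤ dstar θ y) := by
  obtain rfl : dstar = quadExt ((C / 2) • x) := funext₂ hdstar
  have hd₀ : ∀ θ, d θ 0 = quadExt ((C / 2) • x) θ 0 := fun θ => by
    rw [hd, quadExt_zero]; ring
  have hd₁ : ∀ θ, d θ 1 = quadExt ((C / 2) • x) θ 1 := fun θ => by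
    rw [hd, quadExt_one, real_inner_smul_left]; ring
  refine ⟨(convexOn_quadExt _).subset (subset_univ _) (convex_univ.prod (convex_Icc 0 1)),
    fun θ => (hd₀ θ).symm, fun θ => (hd₁ θ).symm, ?_⟩
  intro g hg hg₀ hg₁ θ y hy
  exact le_quadExt_of_convexOn hg (fun θ => ((hg₀ θ).trans (hd₀ θ)).le)
    (fun θ => ((hg₁ θ).trans (hd₁ θ)).le) hy

/-- closed form of the tightest convex extension of
`d(θ,y) = ‖θ‖² − C⟨x,θ⟩y`. -/
theorem instructive_example_tightest
    (m : ℕ) (x : EuclideanSpace ℝ (Fin m)) (C : ℝ) (hC : 0 < C)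
    (d : EuclideanSpace ℝ (Fin m) → ℝ → ℝ)
    (hd : ∀ θ y, d θ y = ‖θ‖ ^ 2 - C * (inner ℝ x θ : ℝ) * y)
    (dstar : EuclideanSpace ℝ (Fin m) → ℝ → ℝ)
    (hdstar : ∀ θ y, dstar θ y = ‖θ - y • ((C / 2) • x)‖ ^ 2 - y * ‖(C / 2) • x‖ ^ 2) :
    ConvexOn ℝ (univ ×ˢ Icc (0:ℝ) 1) (fun p => dstar p.1 p.2) ∧
    (∀ θ, dstar θ 0 = d θ 0) ∧ (∀ θ, dstar θ 1 = d θ 1) ∧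
    (∀ g : EuclideanSpace ℝ (Fin m) × ℝ → ℝ,
      ConvexOn ℝ (univ ×ˢ Icc (0:ℝ) 1) g →
      (∀ θ, g (θ, 0) = d θ 0) → (∀ θ, g (θ, 1) = d θ 1) →
      ∀ θ, ∀ y ∈ Icc (0:ℝ) 1, g (θ, y) ≤ dstar θ y) :=
  instructive_example_tightest_general m x C d hd dstar hdstar
end

section
/- Let Θ ⊆ ℝ^m be convex, d₀, d₁ : Θ → ℝ convex, θ ∈ Θ, y ∈ (0,1). Suppose (θ̂⁰, θ̂¹) ∈ Θ² with (1−y)θ̂⁰ + yθ̂¹ = θ minimizes (1−y)d₀(θ⁰) + y d₁(θ¹) over all such pairs, and both θ̂⁰, θ̂¹ lie in the interior of Θ. Then the subdifferentials ∂d₀(θ̂⁰) and ∂d₁(θ̂¹) have a common element. -/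
/-!
Perturbing the minimizing pair along `t₀ = θ₀ + y • x`, `t₁ = θ₁ - (1 - y) • x` keeps the
constraint, so `x = 0` minimizes the sum of the two convex functions `(1 - y) d₀ (θ₀ + y • x)` and
`y d₁ (θ₁ - (1 - y) • x)`, the first of which is continuous near `0` because `θ₀` is interior.
Separating (Hahn–Banach) the open strict epigraph of the first from the hypograph of the optimal
value minus the second yields a linear functional that is a subgradient of the first at `0` and
whose negative is a subgradient of the second; undoing the rescaling turns it into a common
subgradient of `d₀` at `θ₀` (relative to the interior of `Θ`) and of `d₁` at `θ₁`. Convexity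
spreads a subgradient inequality at an interior point from the interior to all of `Θ`.
-/

open Set

/-- The subdifferential of `f` (relative to the domain `s`) at `x`. -/
def subdiff {m : ℕ} (f : EuclideanSpace ℝ (Fin m) → ℝ) (s : Set (EuclideanSpace ℝ (Fin m)))
    (x : EuclideanSpace ℝ (Fin m)) : Set (EuclideanSpace ℝ (Fin m)) :=
  {v | ∀ z ∈ s, f x + (inner ℝ v (z - x) : ℝ) ≤ f z}

theorem isOpen_strictEpigraph {E : Type*} [TopologicalSpace E] {U : Set E} {f : E → ℝ}
    (hU : IsOpen U) (hf : ContinuousOn f U) :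
    IsOpen {p : E × ℝ | p.1 ∈ U ∧ f p.1 < p.2} := by
  have hcont : ContinuousOn (fun p : E × ℝ => p.2 - f p.1) (U ×ˢ univ) :=
    continuousOn_snd.sub (hf.comp continuousOn_fst fun _ hp => hp.1)
  convert hcont.isOpen_inter_preimage (hU.prod isOpen_univ) (isOpen_Ioi (a := 0)) using 1
  ext p
  simp

theorem ConvexOn.comp_add_smul {E : Type*} [AddCommGroup E] [Module ℝ E] {s : Set E} {f : E → ℝ}
    (hf : ConvexOn ℝ s f) (a : E) (c : ℝ) :
    ConvexOn ℝ {x | a + c • x ∈ s} (fun x => f (a + c • x)) :=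
  (hf.translate_right a).comp_linearMap (LinearMap.lsmul ℝ E c)

section

variable {E : Type*} [TopologicalSpace E] [AddCommGroup E] [Module ℝ E]

def IsSubgradient (s : Set E) (f : E → ℝ) (a : E) (ℓ : StrongDual ℝ E) : Prop :=
  ∀ z ∈ s, f a + ℓ (z - a) ≤ f z

theorem IsSubgradient.of_comp_add_smul {s : Set E} {f : E → ℝ} {a : E} {ℓ : StrongDual ℝ E}
    {r c : ℝ} (h : IsSubgradient {x | a + c • x ∈ s} (fun x => r * f (a + c • x)) 0 ℓ)
    (hr : 0 < r) (hc : c ≠ 0) :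
    IsSubgradient s f a ((r * c)⁻¹ • ℓ) := by
  intro z hz
  have hz' : a + c • c⁻¹ • (z - a) = z := by
    rw [smul_smul, mul_inv_cancel₀ hc, one_smul, add_sub_cancel]
  have h' := h (c⁻¹ • (z - a)) (by simpa [hz'] using hz)
  simp only [smul_zero, add_zero, sub_zero, hz', map_smul, smul_eq_mul] at h'
  rw [smul_apply, smul_eq_mul, ← mul_le_mul_iff_of_pos_left hr]
  calc r * (f a + (r * c)⁻¹ * ℓ (z - a)) = r * f a + c⁻¹ * ℓ (z - a) := by field_simp
    _ ≤ r * f z := h'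

variable [IsTopologicalAddGroup E] [ContinuousSMul ℝ E]

theorem IsSubgradient.of_interior {s : Set E} {f : E → ℝ} {a : E} {ℓ : StrongDual ℝ E}
    (h : IsSubgradient (interior s) f a ℓ) (hf : ConvexOn ℝ s f) (ha : a ∈ interior s) :
    IsSubgradient s f a ℓ := by
  intro z hz
  have hmid : (2⁻¹ : ℝ) • a + (2⁻¹ : ℝ) • z ∈ interior s :=
    hf.1.combo_interior_self_mem_interior ha hz (by norm_num) (by norm_num) (by norm_num)
  have hle := h _ hmid
  have hconv := hf.2 (interior_subset ha) hz (by norm_num : (0:ℝ) ≤ 2⁻¹) (by norm_num : (0:ℝ) ≤ 2⁻¹)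
    (by norm_num)
  have hsub : (2⁻¹ : ℝ) • a + (2⁻¹ : ℝ) • z - a = (2⁻¹ : ℝ) • (z - a) := by module
  rw [hsub, map_smul, smul_eq_mul] at hle
  simp only [smul_eq_mul] at hconv
  linarith

theorem ConvexOn.exists_affine_between {U V : Set E} {f g : E → ℝ} (hf : ConvexOn ℝ U f)
    (hU : IsOpen U) (hfc : ContinuousOn f U) (hg : ConcaveOn ℝ V g) (hUV : (U ∩ V).Nonempty)
    (hgf : ∀ x ∈ U ∩ V, g x ≤ f x) :
    ∃ (ℓ : StrongDual ℝ E) (b : ℝ), (∀ x ∈ U, ℓ x + b ≤ f x) ∧ ∀ x ∈ V, g x ≤ ℓ x + b := by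
  obtain ⟨F, u, hFU, hFV⟩ := geometric_hahn_banach_open hf.convex_strict_epigraph
    (isOpen_strictEpigraph hU hfc) hg.convex_hypograph <| by
      rw [Set.disjoint_left]
      rintro ⟨x, t⟩ ⟨hxU, hft⟩ ⟨hxV, htg⟩
      exact (hgf x ⟨hxU, hxV⟩).not_gt (htg.trans_lt' hft)
  set c := F (0, 1)
  have hF : ∀ x t, F (x, t) = F (x, 0) + t * c := fun x t => by
    rw [← smul_eq_mul, ← map_smul, ← map_add, Prod.smul_mk, smul_zero, smul_eq_mul, mul_one,
      Prod.mk_add_mk, add_zero, zero_add]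
  -- The separating hyperplane is not vertical: over a point of `U ∩ V` it must pass between
  -- `(x, g x)` and the points `(x, t)`, `t > f x`.
  have hc : c < 0 := by
    obtain ⟨x, hxU, hxV⟩ := hUV
    have h₁ := hFU (x, f x + 1) ⟨hxU, lt_add_one _⟩
    have h₂ := hFV (x, g x) ⟨hxV, le_rfl⟩
    rw [hF] at h₁ h₂
    nlinarith [hgf x ⟨hxU, hxV⟩]
  set k := (-c)⁻¹
  have hk : 0 < k := inv_pos.2 (neg_pos.2 hc)
  have hkc : k * c = -1 := by simp only [k, inv_neg, neg_mul, inv_mul_cancel₀ hc.ne]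
  have hFk : ∀ x t, k * F (x, t) = k * F (x, 0) - t := fun x t => by
    rw [hF]; linear_combination t * hkc
  refine ⟨k • F.comp (ContinuousLinearMap.inl ℝ E ℝ), -(k * u), fun x hx => ?_, fun x hx => ?_⟩
  · refine le_of_forall_pos_lt_add fun ε hε => ?_
    have := mul_lt_mul_of_pos_left (hFU (x, f x + ε) ⟨hx, lt_add_of_pos_right _ hε⟩) hk
    simp only [smul_apply, ContinuousLinearMap.comp_apply, ContinuousLinearMap.inl_apply,
      smul_eq_mul]
    linarith [hFk x (f x + ε)]
  · have := mul_le_mul_of_nonneg_left (hFV (x, g x) ⟨hx, le_rfl⟩) hk.le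
    simp only [smul_apply, ContinuousLinearMap.comp_apply, ContinuousLinearMap.inl_apply,
      smul_eq_mul]
    linarith [hFk x (g x)]

theorem ConvexOn.exists_isSubgradient_of_isMinOn_add {U V : Set E} {f g : E → ℝ}
    (hf : ConvexOn ℝ U f) (hU : IsOpen U) (hfc : ContinuousOn f U) (hg : ConvexOn ℝ V g)
    (hU0 : (0 : E) ∈ U) (hV0 : (0 : E) ∈ V) (hmin : IsMinOn (f + g) (U ∩ V) 0) :
    ∃ ℓ, IsSubgradient U f 0 ℓ ∧ IsSubgradient V g 0 (-ℓ) := by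
  obtain ⟨ℓ, b, hℓf, hℓg⟩ := hf.exists_affine_between hU hfc (hg.neg.add_const (f 0 + g 0))
    ⟨0, hU0, hV0⟩ fun x hx => by
      have := isMinOn_iff.1 hmin x hx
      simp only [Pi.add_apply, Pi.neg_apply] at this ⊢
      linarith
  obtain rfl : b = f 0 := le_antisymm (by simpa using hℓf 0 hU0) (by simpa using hℓg 0 hV0)
  refine ⟨ℓ, fun x hx => ?_, fun x hx => ?_⟩
  · simpa [add_comm] using hℓf x hx
  · have := hℓg x hx
    simp only [Pi.add_apply, Pi.neg_apply, sub_zero, neg_apply] at this ⊢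
    linarith

theorem exists_common_isSubgradient_of_forall_le {s t : Set E} {f g : E → ℝ} {a b : E} {α β : ℝ}
    (hf : ConvexOn ℝ s f) (hs : IsOpen s) (hfc : ContinuousOn f s) (hg : ConvexOn ℝ t g)
    (hα : 0 < α) (hβ : 0 < β) (ha : a ∈ s) (hb : b ∈ t)
    (hmin : ∀ t₀ ∈ s, ∀ t₁ ∈ t, α • t₀ + β • t₁ = α • a + β • b →
      α * f a + β * g b ≤ α * f t₀ + β * g t₁) :
    ∃ ℓ, IsSubgradient s f a ℓ ∧ IsSubgradient t g b ℓ := by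
  have hmin' : IsMinOn ((fun x => α * f (a + β • x)) + fun x => β * g (b + (-α) • x))
      ({x | a + β • x ∈ s} ∩ {x | b + (-α) • x ∈ t}) 0 :=
    isMinOn_iff.2 fun x ⟨hxs, hxt⟩ => by simpa using hmin _ hxs _ hxt (by module)
  have hcont : ContinuousOn (fun x => α * f (a + β • x)) {x | a + β • x ∈ s} :=
    (hfc.comp (f := fun x => a + β • x) (by fun_prop) fun _ hx => hx).const_smul α
  obtain ⟨ℓ, hℓf, hℓg⟩ := ((hf.comp_add_smul a β).smul hα.le).exists_isSubgradient_of_isMinOn_add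
    (hs.preimage (by fun_prop)) hcont ((hg.comp_add_smul b (-α)).smul hβ.le) (by simpa) (by simpa)
    hmin'
  refine ⟨(α * β)⁻¹ • ℓ, hℓf.of_comp_add_smul hα hβ.ne', ?_⟩
  convert hℓg.of_comp_add_smul hβ (neg_ne_zero.2 hα.ne') using 1
  rw [mul_neg, inv_neg, neg_smul_neg, mul_comm]

end

theorem IsSubgradient.toDual_symm_mem_subdiff {m : ℕ} {s : Set (EuclideanSpace ℝ (Fin m))}
    {f : EuclideanSpace ℝ (Fin m) → ℝ} {x : EuclideanSpace ℝ (Fin m)}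
    {ℓ : StrongDual ℝ (EuclideanSpace ℝ (Fin m))} (h : IsSubgradient s f x ℓ) :
    (InnerProductSpace.toDual ℝ _).symm ℓ ∈ subdiff f s x := fun z hz => by
  simpa [InnerProductSpace.toDual_symm_apply] using h z hz

theorem minimizer_common_subgradient_general
    (m : ℕ) (Θ : Set (EuclideanSpace ℝ (Fin m))) (hΘ : Convex ℝ Θ)
    (d₀ d₁ : EuclideanSpace ℝ (Fin m) → ℝ)
    (hd₀ : ConvexOn ℝ Θ d₀) (hd₁ : ConvexOn ℝ Θ d₁)
    (θ : EuclideanSpace ℝ (Fin m)) (y : ℝ) (hy : y ∈ Ioo (0:ℝ) 1)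
    (θ0 θ1 : EuclideanSpace ℝ (Fin m)) (hθ1 : θ1 ∈ Θ)
    (hconstr : (1 - y) • θ0 + y • θ1 = θ)
    (hint0 : θ0 ∈ interior Θ)
    (hmin : ∀ t0 ∈ Θ, ∀ t1 ∈ Θ, (1 - y) • t0 + y • t1 = θ →
      (1 - y) * d₀ θ0 + y * d₁ θ1 ≤ (1 - y) * d₀ t0 + y * d₁ t1) :
    (subdiff d₀ Θ θ0 ∩ subdiff d₁ Θ θ1).Nonempty := by
  obtain ⟨ℓ, hℓ₀, hℓ₁⟩ := exists_common_isSubgradient_of_forall_le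
    (hd₀.subset interior_subset hΘ.interior) isOpen_interior hd₀.continuousOn_interior hd₁
    (sub_pos.2 hy.2) hy.1 hint0 hθ1
    fun t0 ht0 t1 ht1 h => hmin t0 (interior_subset ht0) t1 ht1 (h.trans hconstr)
  exact ⟨_, (hℓ₀.of_interior hd₀ hint0).toDual_symm_mem_subdiff, hℓ₁.toDual_symm_mem_subdiff⟩

/-- at an interior minimizer of the weighted infimal convolution,
the subdifferentials of `d₀` and `d₁` intersect. -/
theorem minimizer_common_subgradient
    (m : ℕ) (Θ : Set (EuclideanSpace ℝ (Fin m))) (hΘ : Convex ℝ Θ)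
    (d₀ d₁ : EuclideanSpace ℝ (Fin m) → ℝ)
    (hd₀ : ConvexOn ℝ Θ d₀) (hd₁ : ConvexOn ℝ Θ d₁)
    (θ : EuclideanSpace ℝ (Fin m)) (hθ : θ ∈ Θ) (y : ℝ) (hy : y ∈ Ioo (0:ℝ) 1)
    (θ0 θ1 : EuclideanSpace ℝ (Fin m)) (hθ0 : θ0 ∈ Θ) (hθ1 : θ1 ∈ Θ)
    (hconstr : (1 - y) • θ0 + y • θ1 = θ)
    (hint0 : θ0 ∈ interior Θ) (hint1 : θ1 ∈ interior Θ)
    (hmin : ∀ t0 ∈ Θ, ∀ t1 ∈ Θ, (1 - y) • t0 + y • t1 = θ →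
      (1 - y) * d₀ θ0 + y * d₁ θ1 ≤ (1 - y) * d₀ t0 + y * d₁ t1) :
    (subdiff d₀ Θ θ0 ∩ subdiff d₁ Θ θ1).Nonempty :=
  minimizer_common_subgradient_general m Θ hΘ d₀ d₁ hd₀ hd₁ θ y hy θ0 θ1 hθ1 hconstr hint0 hmin
end

section
/- Let l : ℝ × {0,1} → [0,∞) with l(·,0) and l(·,1) convex, and let x ∈ ℝ^m, C > 0, d(θ,y) = (1/2)‖θ‖₂² + C·l(⟨x,θ⟩, y). For θ ∈ ℝ^m and y ∈ (0,1), if z ∈ ℝ satisfies z ∈ ∂l(·,0)(xᵀ(θ − yCxz)) − ∂l(·,1)(xᵀ(θ + (1−y)Cxz)), then θ̂⁰ := θ − yCxz and θ̂¹ := θ + (1−y)Cxz minimize (1−y)d(θ⁰,0) + y d(θ¹,1) subject to (1−y)θ⁰ + yθ¹ = θ. -/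
open Set

/-- Subdifferential of a convex function `f : ℝ → ℝ` at `r`. -/
def subdiffR (f : ℝ → ℝ) (r : ℝ) : Set ℝ :=
  {v | ∀ z : ℝ, f r + v * (z - r) ≤ f z}

/-!
With `a`, `b` the two subgradients, the vector `g = θ̂⁰ + C a x = θ̂¹ + C b x` (the two
expressions agree because `z = a - b`) is a subgradient of `d(·,0)` at `θ̂⁰` and of `d(·,1)`
at `θ̂¹`. For any feasible pair `(t⁰, t¹)` the weighted differences `t^i - θ̂^i` sum to zero,
so the two linear minorants `d(θ̂^i, i) + ⟪g, t^i - θ̂^i⟫` add up to the value at `(θ̂⁰, θ̂¹)`.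
-/

section Subgradient

variable {E : Type*} [NormedAddCommGroup E] [InnerProductSpace ℝ E]

open scoped RealInnerProductSpace

def HasSubgradientAt (f : E → ℝ) (g u : E) : Prop :=
  ∀ t, f u + ⟪g, t - u⟫ ≤ f t

theorem HasSubgradientAt.add {f₁ f₂ : E → ℝ} {g₁ g₂ u : E}
    (h₁ : HasSubgradientAt f₁ g₁ u) (h₂ : HasSubgradientAt f₂ g₂ u) :
    HasSubgradientAt (fun t => f₁ t + f₂ t) (g₁ + g₂) u := fun t => by
  rw [inner_add_left]
  linarith [h₁ t, h₂ t]

theorem hasSubgradientAt_half_sq_norm (u : E) :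
    HasSubgradientAt (fun t : E => 1 / 2 * ‖t‖ ^ 2) u u := fun t => by
  have h := norm_add_sq_real u (t - u)
  rw [add_sub_cancel] at h
  nlinarith [sq_nonneg ‖t - u‖]

theorem hasSubgradientAt_const_mul_comp_inner {l : ℝ → ℝ} {C a : ℝ} (hC : 0 ≤ C) (x u : E)
    (ha : a ∈ subdiffR l ⟪x, u⟫) :
    HasSubgradientAt (fun t => C * l ⟪x, t⟫) ((C * a) • x) u := fun t => by
  have h := mul_le_mul_of_nonneg_left (ha ⟪x, t⟫) hC
  rw [real_inner_smul_left, inner_sub_right]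
  linarith

/-- First-order optimality certificate for a weighted infimal convolution. -/
theorem HasSubgradientAt.weighted_add_le {f₀ f₁ : E → ℝ} {g u₀ u₁ : E} {w₀ w₁ : ℝ}
    (h₀ : HasSubgradientAt f₀ g u₀) (h₁ : HasSubgradientAt f₁ g u₁)
    (hw₀ : 0 ≤ w₀) (hw₁ : 0 ≤ w₁) {t₀ t₁ : E}
    (ht : w₀ • t₀ + w₁ • t₁ = w₀ • u₀ + w₁ • u₁) :
    w₀ * f₀ u₀ + w₁ * f₁ u₁ ≤ w₀ * f₀ t₀ + w₁ * f₁ t₁ := by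
  have hcancel : w₀ * ⟪g, t₀ - u₀⟫ + w₁ * ⟪g, t₁ - u₁⟫ = 0 := by
    rw [← real_inner_smul_right, ← real_inner_smul_right, ← inner_add_right,
      show w₀ • (t₀ - u₀) + w₁ • (t₁ - u₁) = 0 by
        rw [smul_sub, smul_sub, sub_add_sub_comm, ht, sub_self],
      inner_zero_right]
  nlinarith [mul_le_mul_of_nonneg_left (h₀ t₀) hw₀, mul_le_mul_of_nonneg_left (h₁ t₁) hw₁]

end Subgradient

theorem L2_general_minimizer_general
    (m : ℕ) (l₀ l₁ : ℝ → ℝ)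
    (x : EuclideanSpace ℝ (Fin m)) (C : ℝ) (hC : 0 < C)
    (d : EuclideanSpace ℝ (Fin m) → ℝ → ℝ)
    (hd0 : ∀ θ, d θ 0 = (1 / 2) * ‖θ‖ ^ 2 + C * l₀ (inner ℝ x θ : ℝ))
    (hd1 : ∀ θ, d θ 1 = (1 / 2) * ‖θ‖ ^ 2 + C * l₁ (inner ℝ x θ : ℝ))
    (θ : EuclideanSpace ℝ (Fin m)) (y : ℝ) (hy : y ∈ Ioo (0:ℝ) 1)
    (z : ℝ)
    (hz : ∃ a ∈ subdiffR l₀ (inner ℝ x (θ - (y * C * z) • x) : ℝ),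
          ∃ b ∈ subdiffR l₁ (inner ℝ x (θ + ((1 - y) * C * z) • x) : ℝ),
          z = a - b) :
    ∀ t0 t1 : EuclideanSpace ℝ (Fin m), (1 - y) • t0 + y • t1 = θ →
      (1 - y) * d (θ - (y * C * z) • x) 0 + y * d (θ + ((1 - y) * C * z) • x) 1
        ≤ (1 - y) * d t0 0 + y * d t1 1 := by
  obtain ⟨a, ha, b, hb, rfl⟩ := hz
  intro t0 t1 ht
  have hd0' : (fun t => d t 0) = fun t => 1 / 2 * ‖t‖ ^ 2 + C * l₀ (inner ℝ x t) := funext hd0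
  have hd1' : (fun t => d t 1) = fun t => 1 / 2 * ‖t‖ ^ 2 + C * l₁ (inner ℝ x t) := funext hd1
  have h₀ : HasSubgradientAt (fun t => d t 0) (θ - (y * C * (a - b)) • x + (C * a) • x)
      (θ - (y * C * (a - b)) • x) :=
    hd0' ▸ (hasSubgradientAt_half_sq_norm _).add
      (hasSubgradientAt_const_mul_comp_inner hC.le x _ ha)
  have h₁ : HasSubgradientAt (fun t => d t 1) (θ - (y * C * (a - b)) • x + (C * a) • x)
      (θ + ((1 - y) * C * (a - b)) • x) := by
    convert hd1' ▸ (hasSubgradientAt_half_sq_norm _).add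
      (hasSubgradientAt_const_mul_comp_inner hC.le x _ hb) using 1
    module
  exact h₀.weighted_add_le h₁ (sub_nonneg.2 hy.2.le) hy.1.le (by rw [ht]; module)

/-- for L2 regularization, the fixed-point condition on `z` yields
the minimizers `θ̂⁰ = θ − yCxz`, `θ̂¹ = θ + (1−y)Cxz` of the weighted infimal
convolution. -/
theorem L2_general_minimizer
    (m : ℕ) (l₀ l₁ : ℝ → ℝ)
    (hl₀ : ConvexOn ℝ univ l₀) (hl₁ : ConvexOn ℝ univ l₁)
    (hl₀0 : ∀ r, 0 ≤ l₀ r) (hl₁0 : ∀ r, 0 ≤ l₁ r)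
    (x : EuclideanSpace ℝ (Fin m)) (C : ℝ) (hC : 0 < C)
    (d : EuclideanSpace ℝ (Fin m) → ℝ → ℝ)
    (hd0 : ∀ θ, d θ 0 = (1 / 2) * ‖θ‖ ^ 2 + C * l₀ (inner ℝ x θ : ℝ))
    (hd1 : ∀ θ, d θ 1 = (1 / 2) * ‖θ‖ ^ 2 + C * l₁ (inner ℝ x θ : ℝ))
    (θ : EuclideanSpace ℝ (Fin m)) (y : ℝ) (hy : y ∈ Ioo (0:ℝ) 1)
    (z : ℝ)
    (hz : ∃ a ∈ subdiffR l₀ (inner ℝ x (θ - (y * C * z) • x) : ℝ),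
          ∃ b ∈ subdiffR l₁ (inner ℝ x (θ + ((1 - y) * C * z) • x) : ℝ),
          z = a - b) :
    ∀ t0 t1 : EuclideanSpace ℝ (Fin m), (1 - y) • t0 + y • t1 = θ →
      (1 - y) * d (θ - (y * C * z) • x) 0 + y * d (θ + ((1 - y) * C * z) • x) 1
        ≤ (1 - y) * d t0 0 + y * d t1 1 :=
  L2_general_minimizer_general m l₀ l₁ x C hC d hd0 hd1 θ y hy z hz
end

section
/- For the Hinge loss l(r,y) = (C₀(1−y) + C₁y)·max{0, 1 − (2y−1)r} with C₀, C₁ > 0, and d(θ,y) = (1/2)‖θ‖₂² + C·l(⟨x,θ⟩,y), any z ∈ ℝ satisfying z ∈ ∂l(·,0)(xᵀ(θ − yCxz)) − ∂l(·,1)(xᵀ(θ + (1−y)Cxz)) with x ≠ 0 belongs to the set {0, C₀, C₁, C₀+C₁, (1 + xᵀθ)/(yC xᵀx), (1 − xᵀθ)/((1−y)C xᵀx)}. -/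
open Set Filter Topology

lemma eq_of_mem_subdiffR_of_hasDerivAt {f : ℝ → ℝ} {r v f' : ℝ} (hv : v ∈ subdiffR f r)
    (hf : HasDerivAt f f' r) : v = f' := by
  have hderiv := hf.sub (((hasDerivAt_id' r).sub_const r).const_mul v)
  have hmin : IsLocalMin (f - fun z => v * (z - r)) r :=
    Eventually.of_forall fun z => by
      simp only [Pi.sub_apply, sub_self, mul_zero, sub_zero]
      linarith [hv z]
  linarith [hmin.hasDerivAt_eq_zero hderiv]

lemma neg_mem_subdiffR_comp_neg {f : ℝ → ℝ} {r v : ℝ} (hv : v ∈ subdiffR f r) :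
    -v ∈ subdiffR (fun t => f (-t)) (-r) := fun z => by
  have := hv (-z)
  simp only [neg_neg]
  linarith

lemma mem_subdiffR_hinge {c r a : ℝ} (ha : a ∈ subdiffR (fun t => c * max 0 (1 + t)) r) :
    r = -1 ∨ a = 0 ∨ a = c := by
  rcases lt_trichotomy r (-1) with h | h | h
  · refine Or.inr (Or.inl (eq_of_mem_subdiffR_of_hasDerivAt ha ?_))
    refine (hasDerivAt_const r 0).congr_of_eventuallyEq ?_
    filter_upwards [eventually_lt_nhds h] with t ht
    simp [max_eq_left (by linarith : 1 + t ≤ 0)]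
  · exact Or.inl h
  · refine Or.inr (Or.inr (eq_of_mem_subdiffR_of_hasDerivAt ha ?_))
    have hlin : HasDerivAt (fun t => c * (1 + t)) c r := by
      simpa using ((hasDerivAt_id r).const_add 1).const_mul c
    refine hlin.congr_of_eventuallyEq ?_
    filter_upwards [eventually_gt_nhds h] with t ht
    simp [max_eq_right (by linarith : 0 ≤ 1 + t)]

lemma mem_subdiffR_hinge_neg {c r b : ℝ} (hb : b ∈ subdiffR (fun t => c * max 0 (1 - t)) r) :
    r = 1 ∨ b = 0 ∨ b = -c := by
  have := mem_subdiffR_hinge (c := c) (r := -r) (a := -b) (by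
    simpa [sub_eq_add_neg] using neg_mem_subdiffR_comp_neg hb)
  rcases this with h | h | h
  · exact Or.inl (by linarith)
  · exact Or.inr (Or.inl (by linarith))
  · exact Or.inr (Or.inr (by linarith))

theorem hinge_L2_candidates_general
    (m : ℕ) (C₀ C₁ : ℝ)
    (l₀ l₁ : ℝ → ℝ)
    (hl₀ : ∀ r, l₀ r = C₀ * max 0 (1 + r))
    (hl₁ : ∀ r, l₁ r = C₁ * max 0 (1 - r))
    (x : EuclideanSpace ℝ (Fin m)) (hx : x ≠ 0) (C : ℝ) (hC : 0 < C)
    (θ : EuclideanSpace ℝ (Fin m)) (y : ℝ) (hy : y ∈ Ioo (0:ℝ) 1)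
    (z : ℝ)
    (hz : ∃ a ∈ subdiffR l₀ (inner ℝ x (θ - (y * C * z) • x) : ℝ),
          ∃ b ∈ subdiffR l₁ (inner ℝ x (θ + ((1 - y) * C * z) • x) : ℝ),
          z = a - b) :
    z ∈ ({0, C₀, C₁, C₀ + C₁,
          (1 + (inner ℝ x θ : ℝ)) / (y * C * (inner ℝ x x : ℝ)),
          (1 - (inner ℝ x θ : ℝ)) / ((1 - y) * C * (inner ℝ x x : ℝ))} : Set ℝ) := by
  obtain ⟨a, ha, b, hb, rfl⟩ := hz
  rw [funext hl₀, inner_sub_right, real_inner_smul_right] at ha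
  rw [funext hl₁, inner_add_right, real_inner_smul_right] at hb
  have hxx : 0 < (inner ℝ x x : ℝ) := real_inner_self_pos.mpr hx
  obtain ⟨hy₀, hy₁⟩ := hy
  rcases mem_subdiffR_hinge ha with h₀ | ha
  · have : a - b = (1 + inner ℝ x θ) / (y * C * inner ℝ x x) := by
      rw [eq_div_iff (by positivity)]
      linarith
    simp [this]
  rcases mem_subdiffR_hinge_neg hb with h₁ | hb
  · have : a - b = (1 - inner ℝ x θ) / ((1 - y) * C * inner ℝ x x) := by
      rw [eq_div_iff (mul_pos (mul_pos (sub_pos.mpr hy₁) hC) hxx).ne']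
      linarith
    simp [this]
  rcases ha with ha | ha <;> rcases hb with hb | hb <;> simp [ha, hb]

/-- for the weighted Hinge loss with L2 regularization, every solution
`z` of the fixed-point subgradient condition lies in an explicit six-element set. -/
theorem hinge_L2_candidates
    (m : ℕ) (C₀ C₁ : ℝ) (hC₀ : 0 < C₀) (hC₁ : 0 < C₁)
    (l₀ l₁ : ℝ → ℝ)
    (hl₀ : ∀ r, l₀ r = C₀ * max 0 (1 + r))
    (hl₁ : ∀ r, l₁ r = C₁ * max 0 (1 - r))
    (x : EuclideanSpace ℝ (Fin m)) (hx : x ≠ 0) (C : ℝ) (hC : 0 < C)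
    (θ : EuclideanSpace ℝ (Fin m)) (y : ℝ) (hy : y ∈ Ioo (0:ℝ) 1)
    (z : ℝ)
    (hz : ∃ a ∈ subdiffR l₀ (inner ℝ x (θ - (y * C * z) • x) : ℝ),
          ∃ b ∈ subdiffR l₁ (inner ℝ x (θ + ((1 - y) * C * z) • x) : ℝ),
          z = a - b) :
    z ∈ ({0, C₀, C₁, C₀ + C₁,
          (1 + (inner ℝ x θ : ℝ)) / (y * C * (inner ℝ x x : ℝ)),
          (1 - (inner ℝ x θ : ℝ)) / ((1 - y) * C * (inner ℝ x x : ℝ))} : Set ℝ) :=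
  hinge_L2_candidates_general m C₀ C₁ l₀ l₁ hl₀ hl₁ x hx C hC θ y hy z hz
end

section
/- For the squared Hinge loss l(r,y) = ((C₀(1−y) + C₁y)/2)·(max{0, 1 − (2y−1)r})² with C₀, C₁ > 0, and d(θ,y) = (1/2)‖θ‖₂² + C·l(⟨x,θ⟩,y), any z ∈ ℝ satisfying z = l₀'(xᵀ(θ − yCxz)) − l₁'(xᵀ(θ + (1−y)Cxz)) belongs to the set {0, (C₀ + C₀xᵀθ)/(1 + C₀yC xᵀx), (C₁ − C₁xᵀθ)/(1 + C₁(1−y)C xᵀx), (C₀ + C₁ + (C₀−C₁)xᵀθ)/(1 + (C₀y + C₁(1−y))C xᵀx)}. -/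
open Set

/- Each hinge term is either inactive (its `max` is `0`) or active; in each of the four sign
patterns the fixed-point equation is linear in `z`, and its solution is one of the candidates. -/
theorem mem_squared_hinge_candidates_of_fixed_point {c₀ c₁ C y a s z : ℝ}
    (hc₀ : 0 ≤ c₀) (hc₁ : 0 ≤ c₁) (hC : 0 ≤ C) (hy : y ∈ Icc (0 : ℝ) 1) (hs : 0 ≤ s)
    (hz : z = c₀ * max 0 (1 + (a - y * C * z * s)) + c₁ * max 0 (1 - (a + (1 - y) * C * z * s))) :
    z ∈ ({0, (c₀ + c₀ * a) / (1 + c₀ * y * C * s), (c₁ - c₁ * a) / (1 + c₁ * (1 - y) * C * s),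
      (c₀ + c₁ + (c₀ - c₁) * a) / (1 + (c₀ * y + c₁ * (1 - y)) * C * s)} : Set ℝ) := by
  obtain ⟨hy₀, hy₁⟩ := hy
  have hy₁ : 0 ≤ 1 - y := sub_nonneg.2 hy₁
  rcases le_total (1 + (a - y * C * z * s)) 0 with h₀ | h₀ <;>
    rcases le_total (1 - (a + (1 - y) * C * z * s)) 0 with h₁ | h₁
  · left
    simpa [max_eq_left h₀, max_eq_left h₁] using hz
  · rw [max_eq_left h₀, max_eq_right h₁] at hz
    right; right; left
    rw [eq_div_iff (by positivity)]
    linear_combination hz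
  · rw [max_eq_right h₀, max_eq_left h₁] at hz
    right; left
    rw [eq_div_iff (by positivity)]
    linear_combination hz
  · rw [max_eq_right h₀, max_eq_right h₁] at hz
    right; right; right
    rw [mem_singleton_iff, eq_div_iff (by positivity)]
    linear_combination hz

/-- for the weighted squared Hinge loss with L2 regularization,
every solution `z` of the fixed-point condition `z = l₀'(xᵀθ̂⁰) − l₁'(xᵀθ̂¹)`
lies in an explicit four-element set. -/
theorem squared_hinge_L2_candidates
    (m : ℕ) (C₀ C₁ : ℝ) (hC₀ : 0 < C₀) (hC₁ : 0 < C₁)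
    (x : EuclideanSpace ℝ (Fin m)) (C : ℝ) (hC : 0 < C)
    (θ : EuclideanSpace ℝ (Fin m)) (y : ℝ) (hy : y ∈ Ioo (0:ℝ) 1)
    (z : ℝ)
    (hz : z = C₀ * max 0 (1 + (inner ℝ x (θ - (y * C * z) • x) : ℝ))
            - (-(C₁ * max 0 (1 - (inner ℝ x (θ + ((1 - y) * C * z) • x) : ℝ))))) :
    z ∈ ({0,
          (C₀ + C₀ * (inner ℝ x θ : ℝ)) / (1 + C₀ * y * C * (inner ℝ x x : ℝ)),
          (C₁ - C₁ * (inner ℝ x θ : ℝ)) / (1 + C₁ * (1 - y) * C * (inner ℝ x x : ℝ)),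
          (C₀ + C₁ + (C₀ - C₁) * (inner ℝ x θ : ℝ)) /
            (1 + (C₀ * y + C₁ * (1 - y)) * C * (inner ℝ x x : ℝ))} : Set ℝ) := by
  rw [inner_sub_right, inner_add_right, real_inner_smul_right, real_inner_smul_right,
    sub_neg_eq_add] at hz
  exact mem_squared_hinge_candidates_of_fixed_point hC₀.le hC₁.le hC.le (Ioo_subset_Icc_self hy)
    real_inner_self_nonneg hz
end

section
/- Let d₀, d₁ : ℝ^m → [0,∞) be convex. For fixed θ ∈ ℝ^m, the function y ↦ Ψ(θ, y) := inf{(1−y)d₀(θ⁰) + y d₁(θ¹) : (1−y)θ⁰ + yθ¹ = θ} is convex on (0,1). -/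
/-!
Ψ(θ, ·) is an infimum of values of feasible decompositions, so it is convex as soon as a convex
combination of feasible values at `p` and `q` dominates a feasible value at the combined weight.
Given decompositions at `p` and `q`, average the rescaled parts `(1 - p) θ⁰` with `(1 - q) θ⁰'`
and `p θ¹` with `q θ¹'`; the perspective `(t, x) ↦ t d(x / t)` of a convex function is jointly
convex, which bounds the cost of the averaged decomposition.
-/

open Set

/-- The weighted infimal convolution `Ψ(θ, y)`. -/
noncomputable def Psi {m : ℕ} (d₀ d₁ : EuclideanSpace ℝ (Fin m) → ℝ)
    (θ : EuclideanSpace ℝ (Fin m)) (y : ℝ) : ℝ :=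
  sInf {v : ℝ | ∃ θ0 θ1 : EuclideanSpace ℝ (Fin m),
    (1 - y) • θ0 + y • θ1 = θ ∧ v = (1 - y) * d₀ θ0 + y * d₁ θ1}

lemma convexOn_sInf {E : Type*} [AddCommGroup E] [Module ℝ E] {s : Set E} (hs : Convex ℝ s)
    (S : E → Set ℝ) (hne : ∀ x ∈ s, (S x).Nonempty) (hbdd : ∀ x ∈ s, BddBelow (S x))
    (hcomb : ∀ x ∈ s, ∀ y ∈ s, ∀ a b : ℝ, 0 ≤ a → 0 ≤ b → a + b = 1 →
      ∀ u ∈ S x, ∀ v ∈ S y, ∃ w ∈ S (a • x + b • y), w ≤ a * u + b * v) :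
    ConvexOn ℝ s (fun x => sInf (S x)) := by
  refine ⟨hs, fun x hx y hy a b ha hb hab => le_of_forall_pos_le_add fun ε hε => ?_⟩
  obtain ⟨u, hu, hu_lt⟩ := Real.lt_sInf_add_pos (hne x hx) hε
  obtain ⟨v, hv, hv_lt⟩ := Real.lt_sInf_add_pos (hne y hy) hε
  obtain ⟨w, hw, hw_le⟩ := hcomb x hx y hy a b ha hb hab u hu v hv
  calc sInf (S (a • x + b • y)) ≤ w := csInf_le (hbdd _ (hs hx hy ha hb hab)) hw
    _ ≤ a * u + b * v := hw_le
    _ ≤ a * (sInf (S x) + ε) + b * (sInf (S y) + ε) := by gcongr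
    _ = a • sInf (S x) + b • sInf (S y) + ε := by
      rw [smul_eq_mul, smul_eq_mul, ← sub_eq_zero]; linear_combination ε * hab

lemma ConvexOn.perspective_le {E : Type*} [AddCommGroup E] [Module ℝ E] {C : Set E}
    {f : E → ℝ} (hf : ConvexOn ℝ C f) {x y : E} (hx : x ∈ C) (hy : y ∈ C) {s t a b : ℝ}
    (hs : 0 < s) (ht : 0 < t) (ha : 0 ≤ a) (hb : 0 ≤ b) (hab : a + b = 1) :
    (a * s + b * t) * f ((a * s + b * t)⁻¹ • ((a * s) • x + (b * t) • y))
      ≤ a * (s * f x) + b * (t * f y) := by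
  set r := a * s + b * t
  have hr : 0 < r := convex_Ioi (0 : ℝ) hs ht ha hb hab
  have hpoint : r⁻¹ • ((a * s) • x + (b * t) • y) = (a * s / r) • x + (b * t / r) • y := by
    rw [smul_add, smul_smul, smul_smul, div_eq_inv_mul, div_eq_inv_mul]
  have hweights : a * s / r + b * t / r = 1 := by rw [← add_div, div_self hr.ne']
  have hconv := hf.2 hx hy (by positivity) (by positivity) hweights
  rw [← hpoint, smul_eq_mul, smul_eq_mul] at hconv
  calc r * f (r⁻¹ • ((a * s) • x + (b * t) • y))
      ≤ r * (a * s / r * f x + b * t / r * f y) := mul_le_mul_of_nonneg_left hconv hr.le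
    _ = a * (s * f x) + b * (t * f y) := by field_simp

section WeightedInfConv

variable {E : Type*} [AddCommGroup E] [Module ℝ E] (d₀ d₁ : E → ℝ) (θ : E)

def weightedInfConvSet (y : ℝ) : Set ℝ :=
  {v : ℝ | ∃ θ0 θ1 : E, (1 - y) • θ0 + y • θ1 = θ ∧ v = (1 - y) * d₀ θ0 + y * d₁ θ1}

lemma weightedInfConvSet_nonempty (y : ℝ) : (weightedInfConvSet d₀ d₁ θ y).Nonempty :=
  ⟨_, θ, θ, by rw [← add_smul, sub_add_cancel, one_smul], rfl⟩

lemma weightedInfConvSet_bddBelow {d₀ d₁ : E → ℝ} (hd₀ : ∀ x, 0 ≤ d₀ x) (hd₁ : ∀ x, 0 ≤ d₁ x)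
    {y : ℝ} (hy : y ∈ Icc (0 : ℝ) 1) : BddBelow (weightedInfConvSet d₀ d₁ θ y) := by
  refine ⟨0, ?_⟩
  rintro v ⟨θ0, θ1, -, rfl⟩
  have : 0 ≤ 1 - y := sub_nonneg.2 hy.2
  have := hd₀ θ0
  have := hd₁ θ1
  have := hy.1
  positivity

lemma weightedInfConvSet_combine {d₀ d₁ : E → ℝ} (hd₀ : ConvexOn ℝ univ d₀)
    (hd₁ : ConvexOn ℝ univ d₁) {p q a b u v : ℝ} (hp : p ∈ Ioo (0 : ℝ) 1)
    (hq : q ∈ Ioo (0 : ℝ) 1) (ha : 0 ≤ a) (hb : 0 ≤ b) (hab : a + b = 1)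
    (hu : u ∈ weightedInfConvSet d₀ d₁ θ p) (hv : v ∈ weightedInfConvSet d₀ d₁ θ q) :
    ∃ w ∈ weightedInfConvSet d₀ d₁ θ (a * p + b * q), w ≤ a * u + b * v := by
  obtain ⟨x₀, x₁, hx, rfl⟩ := hu
  obtain ⟨x₀', x₁', hx', rfl⟩ := hv
  have hp₀ : 0 < 1 - p := sub_pos.2 hp.2
  have hq₀ : 0 < 1 - q := sub_pos.2 hq.2
  set r₀ := a * (1 - p) + b * (1 - q)
  set r₁ := a * p + b * q
  have hr₀ : 0 < r₀ := convex_Ioi (0 : ℝ) hp₀ hq₀ ha hb hab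
  have hr₁ : 0 < r₁ := convex_Ioi (0 : ℝ) hp.1 hq.1 ha hb hab
  have hweight : 1 - r₁ = r₀ := by linear_combination -hab
  set X₀ := (a * (1 - p)) • x₀ + (b * (1 - q)) • x₀'
  set X₁ := (a * p) • x₁ + (b * q) • x₁'
  refine ⟨_, ⟨r₀⁻¹ • X₀, r₁⁻¹ • X₁, ?_, rfl⟩, ?_⟩
  · have hsum : X₀ + X₁ = a • ((1 - p) • x₀ + p • x₁) + b • ((1 - q) • x₀' + q • x₁') := by
      module
    rw [hweight, smul_inv_smul₀ hr₀.ne', smul_inv_smul₀ hr₁.ne', hsum, hx, hx', ← add_smul,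
      hab, one_smul]
  · rw [hweight]
    have h₀ := hd₀.perspective_le (mem_univ x₀) (mem_univ x₀') hp₀ hq₀ ha hb hab
    have h₁ := hd₁.perspective_le (mem_univ x₁) (mem_univ x₁') hp.1 hq.1 ha hb hab
    linear_combination h₀ + h₁

end WeightedInfConv

/-- for fixed `θ`, `y ↦ Ψ(θ, y)` is convex on `(0, 1)`. -/
theorem Psi_convex_in_y
    (m : ℕ) (d₀ d₁ : EuclideanSpace ℝ (Fin m) → ℝ)
    (hd₀ : ConvexOn ℝ univ d₀) (hd₁ : ConvexOn ℝ univ d₁)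
    (hd₀0 : ∀ θ, 0 ≤ d₀ θ) (hd₁0 : ∀ θ, 0 ≤ d₁ θ)
    (θ : EuclideanSpace ℝ (Fin m)) :
    ConvexOn ℝ (Ioo (0:ℝ) 1) (fun y => Psi d₀ d₁ θ y) :=
  convexOn_sInf (convex_Ioo 0 1) (weightedInfConvSet d₀ d₁ θ)
    (fun y _ => weightedInfConvSet_nonempty d₀ d₁ θ y)
    (fun _ hy => weightedInfConvSet_bddBelow θ hd₀0 hd₁0 (Ioo_subset_Icc_self hy))
    (fun _ hp _ hq _ _ ha hb hab _ hu _ hv =>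
      weightedInfConvSet_combine θ hd₀ hd₁ hp hq ha hb hab hu hv)
end
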